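/- arXiv:2204.10372 — 3 statements merged into one kernel-verified Lean document; each statement's English description precedes it below -/
import Mathlib

section
/- Let φ be a continuous flow on ℝ^d and R ⊆ ℝ^d a compact set whose boundary is disjoint from Ω(f) (the union of all ω-limit sets). If Ω(f) ∩ R ≠ ∅, R is contained in the region of attraction of Ω(f) ∩ R, and Ω(f) ∩ R lies in the interior of R, then R is recurrent. -/
open Filter Metric

/-- The ω-limit set of a point x₀ under the flow φ. -/
def omegaLimitSet {d : ℕ} (φ : ℝ → EuclideanSpace ℝ (Fin d) → EuclideanSpace ℝ (Fin d))
    (x₀ : EuclideanSpace ℝ (Fin d)) : Set (EuclideanSpace ℝ (Fin d)) :=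
  {y | ∃ u : ℕ → ℝ, Tendsto u atTop atTop ∧ Tendsto (fun n => φ (u n) x₀) atTop (nhds y)}

/-- Ω(f): the union of all ω-limit sets of the flow. -/
def omegaSet {d : ℕ} (φ : ℝ → EuclideanSpace ℝ (Fin d) → EuclideanSpace ℝ (Fin d)) :
    Set (EuclideanSpace ℝ (Fin d)) :=
  ⋃ x, omegaLimitSet φ x

/-- The region of attraction of a set S: points whose trajectory converges to S
(distance to S tends to 0 and every ω-limit point lies in S). -/
def regionOfAttraction {d : ℕ}
    (φ : ℝ → EuclideanSpace ℝ (Fin d) → EuclideanSpace ℝ (Fin d))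
    (S : Set (EuclideanSpace ℝ (Fin d))) : Set (EuclideanSpace ℝ (Fin d)) :=
  {x₀ | Tendsto (fun t => infDist (φ t x₀) S) atTop (nhds 0) ∧ omegaLimitSet φ x₀ ⊆ S}

/-- If R is compact, ∂R ∩ Ω(f) = ∅,  Ω(f) ∩ R ≠ ∅,
R ⊆ A(Ω(f) ∩ R) and Ω(f) ∩ R ⊆ int R, then R is recurrent. -/
theorem recurrent_of_subset_roa
    (d : ℕ) (φ : ℝ → EuclideanSpace ℝ (Fin d) → EuclideanSpace ℝ (Fin d))
    (hcont : Continuous fun p : ℝ × EuclideanSpace ℝ (Fin d) => φ p.1 p.2)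
    (hzero : ∀ x, φ 0 x = x)
    (hsemi : ∀ s t x, φ (s + t) x = φ s (φ t x))
    (R : Set (EuclideanSpace ℝ (Fin d))) (hR : IsCompact R)
    (hbd : frontier R ∩ omegaSet φ = ∅)
    (hne : (omegaSet φ ∩ R).Nonempty)
    (hroa : R ⊆ regionOfAttraction φ (omegaSet φ ∩ R))
    (hint : omegaSet φ ∩ R ⊆ interior R) :
    ∀ x₀ ∈ R, ∃ t > (0 : ℝ), φ t x₀ ∈ R := by
  intro x₀ hx₀
  obtain ⟨hlim, hsub⟩ := hroa hx₀
  set S := omegaSet φ ∩ R with hS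
  have hSR : S ⊆ R := Set.inter_subset_right
  -- eventually infDist ≤ 1
  have hev : ∀ᶠ t in atTop, infDist (φ t x₀) S < 1 :=
    hlim.eventually (gt_mem_nhds one_pos)
  obtain ⟨N, hN⟩ := hev.exists_forall_of_atTop
  -- the sequence v n = φ (N + n) x₀ lies in the compact set cthickening 1 R
  set u : ℕ → ℝ := fun n => N + n with hu
  set v : ℕ → EuclideanSpace ℝ (Fin d) := fun n => φ (u n) x₀ with hv
  have hvK : ∀ n, v n ∈ cthickening 1 R := by
    intro n
    have h1 : infDist (v n) S < 1 := hN (u n) (by simp [hu])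
    have h2 : infDist (v n) R ≤ infDist (v n) S := infDist_le_infDist_of_subset hSR hne
    have hRne : R.Nonempty := hne.mono hSR
    rw [mem_cthickening_iff,
      ENNReal.le_ofReal_iff_toReal_le (infEdist_ne_top hRne) zero_le_one]
    exact h2.trans h1.le
  obtain ⟨y, -, ψ, hψ, hty⟩ := (hR.cthickening (r := 1)).tendsto_subseq hvK
  have huψ : Tendsto (u ∘ ψ) atTop atTop := by
    have h1 : Tendsto u atTop atTop :=
      tendsto_atTop_add_const_left _ N (tendsto_natCast_atTop_atTop)
    exact h1.comp hψ.tendsto_atTop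
  have hyω : y ∈ omegaLimitSet φ x₀ := ⟨u ∘ ψ, huψ, hty⟩
  have hyint : y ∈ interior R := hint (hsub hyω)
  have hev2 : ∀ᶠ n in atTop, v (ψ n) ∈ interior R :=
    hty.eventually (isOpen_interior.mem_nhds hyint)
  have hev3 : ∀ᶠ n in atTop, 0 < u (ψ n) := huψ.eventually_gt_atTop 0
  obtain ⟨n, h1, h2⟩ := (hev2.and hev3).exists
  exact ⟨u (ψ n), h2, interior_subset h1⟩
end

section
/- Let x* be an asymptotically stable equilibrium of a continuous flow φ on ℝ^d with region of attraction A(x*). Then A(x*) is contractible: the map H : [0,1] × A(x*) → A(x*) defined by H(s,x) = φ(s/(1-s), x) for s < 1 and H(1,x) = x* is continuous and gives a homotopy from the identity to the constant map x*. -/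
/-!
The only delicate point is continuity at `s = 1`. Given a neighbourhood `V` of `x*`, stability
gives a neighbourhood `W` of `x*` with `φ t W ⊆ V` for all `t ≥ 0`. If `x` is attracted to `x*`,
then `W` is a neighbourhood of `φ T x` for some `T`, so by continuity of `φ T` some neighbourhood
`U` of `x` is carried into `W` at time `T`, hence into `V` at every time `t ≥ T`. Thus
`φ t y → x*` as `(t, y) → (∞, x)`, and `s ↦ s / (1 - s)` turns `s → 1⁻` into `t → ∞`.
-/

open Filter Set Topology

theorem tendsto_div_one_sub_nhdsLT_one : Tendsto (fun s : ℝ => s / (1 - s)) (𝓝[<] 1) atTop := by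
  have hsub : Tendsto (fun s : ℝ => 1 - s) (𝓝[<] 1) (𝓝[>] 0) := by
    refine tendsto_nhdsWithin_iff.2 ⟨?_, ?_⟩
    · simpa using (tendsto_const_nhds.sub tendsto_id : Tendsto (fun s : ℝ => 1 - s) (𝓝 1) _).mono_left
        nhdsWithin_le_nhds
    · filter_upwards [self_mem_nhdsWithin] with s hs
      exact sub_pos.2 (mem_Iio.1 hs)
  exact (tendsto_nhdsWithin_of_tendsto_nhds tendsto_id).pos_mul_atTop one_pos
    (tendsto_inv_nhdsGT_zero.comp hsub)

section Flow

variable {X : Type*} [TopologicalSpace X] {φ : ℝ → X → X} {xstar x : X}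

theorem tendsto_flow_atTop_prod_nhds (hφ : ∀ t, Continuous (φ t))
    (hsemi : ∀ s t x, φ (s + t) x = φ s (φ t x))
    (hstable : ∀ V ∈ 𝓝 xstar, ∃ W ∈ 𝓝 xstar, ∀ x ∈ W, ∀ t ≥ (0 : ℝ), φ t x ∈ V)
    (hx : Tendsto (fun t => φ t x) atTop (𝓝 xstar)) :
    Tendsto (fun p : ℝ × X => φ p.1 p.2) (atTop ×ˢ 𝓝 x) (𝓝 xstar) := by
  intro V hV
  rw [mem_map]
  obtain ⟨W, hW, hWV⟩ := hstable V hV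
  obtain ⟨T, hT⟩ := (hx.eventually (eventually_eventually_nhds.2 hW)).exists
  filter_upwards [prod_mem_prod (Ici_mem_atTop T) ((hφ T).continuousAt.preimage_mem_nhds hT)]
  rintro ⟨t, y⟩ ⟨ht, hy⟩
  simpa [← hsemi] using hWV _ hy (t - T) (sub_nonneg.2 ht)

noncomputable def attractionHomotopy (φ : ℝ → X → X) (xstar : X) (p : ℝ × X) : X :=
  if p.1 < 1 then φ (p.1 / (1 - p.1)) p.2 else xstar

theorem continuousAt_attractionHomotopy_of_lt_one (hcont : Continuous fun p : ℝ × X => φ p.1 p.2)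
    {s : ℝ} (hs : s < 1) (x : X) : ContinuousAt (attractionHomotopy φ xstar) (s, x) := by
  have hflow : ContinuousAt (fun p : ℝ × X => φ (p.1 / (1 - p.1)) p.2) (s, x) :=
    hcont.continuousAt.comp ((continuousAt_fst.div (continuousAt_const.sub continuousAt_fst)
      (sub_ne_zero.2 hs.ne')).prodMk continuousAt_snd)
  refine hflow.congr ?_
  filter_upwards [(isOpen_lt continuous_fst continuous_const).mem_nhds hs] with p hp
  exact (if_pos hp).symm

theorem continuousAt_attractionHomotopy_one (hφ : ∀ t, Continuous (φ t))
    (hsemi : ∀ s t x, φ (s + t) x = φ s (φ t x))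
    (hstable : ∀ V ∈ 𝓝 xstar, ∃ W ∈ 𝓝 xstar, ∀ x ∈ W, ∀ t ≥ (0 : ℝ), φ t x ∈ V)
    (hx : Tendsto (fun t => φ t x) atTop (𝓝 xstar)) :
    ContinuousAt (attractionHomotopy φ xstar) (1, x) := by
  have hlt : Tendsto (attractionHomotopy φ xstar) (𝓝[<] 1 ×ˢ 𝓝 x) (𝓝 xstar) := by
    refine ((tendsto_flow_atTop_prod_nhds hφ hsemi hstable hx).comp
      (tendsto_div_one_sub_nhdsLT_one.prodMap tendsto_id)).congr' ?_
    filter_upwards [prod_mem_prod self_mem_nhdsWithin univ_mem] with p hp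
    exact (if_pos hp.1).symm
  have hge : Tendsto (attractionHomotopy φ xstar) (𝓝[≥] 1 ×ˢ 𝓝 x) (𝓝 xstar) := by
    refine tendsto_const_nhds.congr' ?_
    filter_upwards [prod_mem_prod self_mem_nhdsWithin univ_mem] with p hp
    exact (if_neg (not_lt.2 hp.1)).symm
  rw [ContinuousAt, nhds_prod_eq, ← nhdsLT_sup_nhdsGE, sup_prod]
  simpa [attractionHomotopy] using hlt.sup hge

end Flow

theorem roa_contractible_general
    (d : ℕ) (φ : ℝ → EuclideanSpace ℝ (Fin d) → EuclideanSpace ℝ (Fin d))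
    (hcont : Continuous fun p : ℝ × EuclideanSpace ℝ (Fin d) => φ p.1 p.2)
    (hzero : ∀ x, φ 0 x = x)
    (hsemi : ∀ s t x, φ (s + t) x = φ s (φ t x))
    (xstar : EuclideanSpace ℝ (Fin d))
    (heq : ∀ t, φ t xstar = xstar)
    (A : Set (EuclideanSpace ℝ (Fin d)))
    (hA : A = {x | Tendsto (fun t => φ t x) atTop (nhds xstar)})
    (hAinv : ∀ x ∈ A, ∀ t ≥ (0 : ℝ), φ t x ∈ A)
    (hstable : ∀ V ∈ nhds xstar, ∃ W ∈ nhds xstar, ∀ x ∈ W, ∀ t ≥ (0 : ℝ), φ t x ∈ V)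
    (H : ℝ × EuclideanSpace ℝ (Fin d) → EuclideanSpace ℝ (Fin d))
    (hH : ∀ s x, H (s, x) = if s < 1 then φ (s / (1 - s)) x else xstar) :
    ContinuousOn H (Set.Icc (0 : ℝ) 1 ×ˢ A) ∧
      (∀ s ∈ Set.Icc (0 : ℝ) 1, ∀ x ∈ A, H (s, x) ∈ A) ∧
      (∀ x ∈ A, H (0, x) = x) ∧ (∀ x ∈ A, H (1, x) = xstar) := by
  obtain rfl : H = attractionHomotopy φ xstar := funext fun p => hH p.1 p.2
  subst hA
  have hxstar : Tendsto (fun t => φ t xstar) atTop (𝓝 xstar) := by simp [heq]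
  refine ⟨?_, ?_, fun x _ => by simp [attractionHomotopy, hzero],
    fun x _ => by simp [attractionHomotopy]⟩
  · rintro ⟨s, x⟩ ⟨⟨-, hs1⟩, hx⟩
    apply ContinuousAt.continuousWithinAt
    rcases hs1.lt_or_eq with hs1 | rfl
    · exact continuousAt_attractionHomotopy_of_lt_one hcont hs1 x
    · exact continuousAt_attractionHomotopy_one (fun t => hcont.comp (Continuous.prodMk_right t))
        hsemi hstable hx
  · rintro s ⟨hs0, -⟩ x hx
    unfold attractionHomotopy
    split_ifs with hs1
    · exact hAinv x hx _ (div_nonneg hs0 (sub_nonneg.2 hs1.le))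
    · exact hxstar

/-- The region of attraction of an asymptotically stable equilibrium is
contractible via the homotopy H(s,x) = φ(s/(1-s), x) for s < 1 and H(1,x) = x*. -/
theorem roa_contractible
    (d : ℕ) (φ : ℝ → EuclideanSpace ℝ (Fin d) → EuclideanSpace ℝ (Fin d))
    (hcont : Continuous fun p : ℝ × EuclideanSpace ℝ (Fin d) => φ p.1 p.2)
    (hzero : ∀ x, φ 0 x = x)
    (hsemi : ∀ s t x, φ (s + t) x = φ s (φ t x))
    (xstar : EuclideanSpace ℝ (Fin d))
    (heq : ∀ t, φ t xstar = xstar)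
    (A : Set (EuclideanSpace ℝ (Fin d)))
    (hA : A = {x | Tendsto (fun t => φ t x) atTop (nhds xstar)})
    (hAopen : IsOpen A)
    (hAinv : ∀ x ∈ A, ∀ t ≥ (0 : ℝ), φ t x ∈ A)
    (hstable : ∀ V ∈ nhds xstar, ∃ W ∈ nhds xstar, ∀ x ∈ W, ∀ t ≥ (0 : ℝ), φ t x ∈ V)
    (H : ℝ × EuclideanSpace ℝ (Fin d) → EuclideanSpace ℝ (Fin d))
    (hH : ∀ s x, H (s, x) = if s < 1 then φ (s / (1 - s)) x else xstar) :
    ContinuousOn H (Set.Icc (0 : ℝ) 1 ×ˢ A) ∧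
      (∀ s ∈ Set.Icc (0 : ℝ) 1, ∀ x ∈ A, H (s, x) ∈ A) ∧
      (∀ x ∈ A, H (0, x) = x) ∧ (∀ x ∈ A, H (1, x) = xstar) :=
  roa_contractible_general d φ hcont hzero hsemi xstar heq A hA hAinv hstable H hH
end

section
/- Let φ be a continuous flow and V a continuous function on an open set A with V(φ(t,x)) strictly decreasing in t for x ∈ A \ {x*}. Let R ⊆ A be compact with x* ∈ int R, and define c̲ = min_{x ∈ ∂R} V(x) and c̄ = max_{x ∈ ∂R} V(x). Then the inclusions {x ∈ A : V(x) ≤ c̲} ⊆ R ⊆ {x ∈ A : V(x) ≤ c̄} hold, assuming every trajectory in A converges to x* and V(x*) = 0 < V(x) for x ≠ x*. -/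
open Filter

/-- If V is a Lyapunov function on A (V(x*) = 0, V > 0 on A \ {x*},
strictly decreasing along trajectories, all trajectories converging to x*), R ⊆ A is
compact with x* ∈ int R, and c̲, c̄ are the min and max of V on ∂R, then
{x ∈ A : V x ≤ c̲} ⊆ R ⊆ {x ∈ A : V x ≤ c̄}. -/
theorem lyapunov_sublevel_sandwich
    (d : ℕ) (φ : ℝ → EuclideanSpace ℝ (Fin d) → EuclideanSpace ℝ (Fin d))
    (hcont : Continuous fun p : ℝ × EuclideanSpace ℝ (Fin d) => φ p.1 p.2)
    (hzero : ∀ x, φ 0 x = x)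
    (hsemi : ∀ s t x, φ (s + t) x = φ s (φ t x))
    (xstar : EuclideanSpace ℝ (Fin d))
    (A : Set (EuclideanSpace ℝ (Fin d))) (hAopen : IsOpen A) (hxA : xstar ∈ A)
    (hAinv : ∀ x ∈ A, ∀ t ≥ (0 : ℝ), φ t x ∈ A)
    (hconv : ∀ x ∈ A, Tendsto (fun t => φ t x) atTop (nhds xstar))
    (V : EuclideanSpace ℝ (Fin d) → ℝ) (hVcont : ContinuousOn V A)
    (hV0 : V xstar = 0) (hVpos : ∀ x ∈ A \ {xstar}, 0 < V x)
    (hVdec : ∀ x ∈ A \ {xstar}, ∀ s t : ℝ, 0 ≤ s → s < t → V (φ t x) < V (φ s x))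
    (R : Set (EuclideanSpace ℝ (Fin d))) (hR : IsCompact R) (hRA : R ⊆ A)
    (hxint : xstar ∈ interior R)
    (clow chigh : ℝ)
    (hclow : IsLeast (V '' frontier R) clow)
    (hchigh : IsGreatest (V '' frontier R) chigh) :
    {x ∈ A | V x ≤ clow} ⊆ R ∧ R ⊆ {x ∈ A | V x ≤ chigh} := by
  have hφc : ∀ t : ℝ, Continuous (φ t) := fun t =>
    hcont.comp (continuous_const.prodMk continuous_id)
  have hφtraj : ∀ y, Continuous fun t : ℝ => φ t y := fun y =>
    hcont.comp (continuous_id.prodMk continuous_const)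
  have hVat : ∀ y ∈ A, ContinuousAt V y := fun y hy =>
    hVcont.continuousAt (hAopen.mem_nhds hy)
  have hVnn : ∀ y ∈ A, 0 ≤ V y := by
    intro y hy
    by_cases h : y = xstar
    · simp [h, hV0]
    · exact (hVpos y ⟨hy, h⟩).le
  -- xstar is an equilibrium
  have hfix : ∀ t : ℝ, 0 ≤ t → φ t xstar = xstar := by
    by_cases hδ : ∃ δ > (0:ℝ), ∀ s, 0 ≤ s → s ≤ δ → φ s xstar = xstar
    · obtain ⟨δ, hδ0, hδfix⟩ := hδ
      have key : ∀ n : ℕ, ∀ t, 0 ≤ t → t ≤ (n + 1) * δ → φ t xstar = xstar := by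
        intro n
        induction n with
        | zero =>
          intro t ht0 ht1
          push_cast at ht1
          exact hδfix t ht0 (by linarith)
        | succ n ih =>
          intro t ht0 ht1
          by_cases h : t ≤ δ
          · exact hδfix t ht0 h
          · have h1 : δ + (t - δ) = t := by ring
            have h2 : φ t xstar = φ δ (φ (t - δ) xstar) := by
              rw [← hsemi, h1]
            push_cast at ht1
            rw [h2, ih (t - δ) (by linarith) (by push_cast; linarith),
              hδfix δ hδ0.le le_rfl]
      intro t ht
      obtain ⟨n, hn⟩ := exists_nat_gt (t / δ)
      have : t ≤ (n + 1) * δ := by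
        have := (div_lt_iff₀ hδ0).mp hn
        nlinarith
      exact key n t ht this
    · push_neg at hδ
      intro t ht
      by_contra hy
      have htpos : 0 < t := by
        rcases lt_or_eq_of_le ht with h | h
        · exact h
        · exact absurd (h ▸ hzero xstar) hy
      have hyA : φ t xstar ∈ A := hAinv xstar hxA t ht
      have hVy : 0 < V (φ t xstar) := hVpos _ ⟨hyA, hy⟩
      -- continuity of s ↦ V (φ s xstar) at 0 with value 0
      have hc0 : ContinuousAt (fun s : ℝ => V (φ s xstar)) 0 := by
        apply ContinuousAt.comp
        · rw [hzero]; exact hVat xstar hxA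
        · exact (hφtraj xstar).continuousAt
      have hev : ∀ᶠ s in nhds (0:ℝ), V (φ s xstar) < V (φ t xstar) := by
        have h0 : (fun s : ℝ => V (φ s xstar)) 0 = 0 := by simp [hzero, hV0]
        have := hc0.eventually_lt continuousAt_const (by simpa [h0] using hVy)
        exact this
      rw [Metric.eventually_nhds_iff] at hev
      obtain ⟨ε, hε, hball⟩ := hev
      obtain ⟨s, hs0, hsle, hsne⟩ := hδ (min (ε / 2) (t / 2))
        (lt_min (by linarith) (by linarith))
      have hsA : φ s xstar ∈ A := hAinv xstar hxA s hs0
      have hst : s < t := lt_of_le_of_lt (hsle.trans (min_le_right _ _)) (by linarith)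
      have hVsw : V (φ s xstar) < V (φ t xstar) := by
        apply hball
        simp only [Real.dist_eq, sub_zero]
        rw [abs_of_nonneg hs0]
        exact lt_of_le_of_lt (hsle.trans (min_le_left _ _)) (by linarith)
      have hdec := hVdec (φ s xstar) ⟨hsA, hsne⟩ 0 (t - s) le_rfl (by linarith)
      rw [hzero, ← hsemi] at hdec
      have : t - s + s = t := by ring
      rw [this] at hdec
      linarith
  have hchigh0 : 0 ≤ chigh := by
    obtain ⟨b, hb, hbV⟩ := hchigh.1
    have : b ∈ R := hR.isClosed.frontier_subset hb
    exact hbV ▸ hVnn b (hRA this)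
  constructor
  · -- first inclusion
    rintro x ⟨hxA', hxV⟩
    by_contra hxR
    have hxne : x ≠ xstar := fun h => hxR (h ▸ interior_subset hxint)
    set E : Set ℝ := {t | 0 ≤ t ∧ φ t x ∈ R} with hEdef
    have hEne : E.Nonempty := by
      have hmem : ∀ᶠ t in atTop, φ t x ∈ R :=
        hconv x hxA' (mem_interior_iff_mem_nhds.mp hxint)
      obtain ⟨t, ht0, htR⟩ := ((eventually_ge_atTop (0:ℝ)).and hmem).exists
      exact ⟨t, ht0, htR⟩
    have hEclosed : IsClosed E := by
      have : E = Set.Ici (0:ℝ) ∩ (fun t => φ t x) ⁻¹' R := rfl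
      rw [this]
      exact isClosed_Ici.inter (hR.isClosed.preimage (hφtraj x))
    have hEbdd : BddBelow E := ⟨0, fun t ht => ht.1⟩
    set T := sInf E with hTdef
    have hTE : T ∈ E := hEclosed.csInf_mem hEne hEbdd
    have hT0 : 0 ≤ T := hTE.1
    have hTR : φ T x ∈ R := hTE.2
    have hTpos : 0 < T := by
      rcases lt_or_eq_of_le hT0 with h | h
      · exact h
      · exact absurd (by rwa [← h, hzero] at hTR) hxR
    have hdec := hVdec x ⟨hxA', hxne⟩ 0 T le_rfl hTpos
    rw [hzero] at hdec
    have hfr : φ T x ∈ frontier R := by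
      rw [frontier_eq_closure_inter_closure]
      refine ⟨subset_closure hTR, ?_⟩
      have hsub : (fun t => φ t x) '' Set.Ico 0 T ⊆ Rᶜ := by
        rintro _ ⟨s, ⟨hs0, hsT⟩, rfl⟩
        intro hmem
        exact absurd (csInf_le hEbdd ⟨hs0, hmem⟩) (not_le.mpr hsT)
      have hTcl : T ∈ closure (Set.Ico 0 T) := by
        rw [closure_Ico (ne_of_lt hTpos)]
        exact ⟨hT0, le_rfl⟩
      have := image_closure_subset_closure_image (hφtraj x) ⟨T, hTcl, rfl⟩
      exact closure_mono hsub this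
    have : clow ≤ V (φ T x) := hclow.2 ⟨φ T x, hfr, rfl⟩
    linarith
  · -- second inclusion
    intro x hxR
    have hxA' : x ∈ A := hRA hxR
    refine ⟨hxA', ?_⟩
    by_contra hxV
    push_neg at hxV
    have hxne : x ≠ xstar := by
      intro h
      rw [h, hV0] at hxV
      linarith
    have hbackne : ∀ t : ℝ, 0 ≤ t → φ (-t) x ≠ xstar := by
      intro t ht h
      apply hxne
      have : φ t (φ (-t) x) = x := by rw [← hsemi]; simp [hzero]
      rw [h, hfix t ht] at this
      exact this.symm
    by_cases hall : ∀ t : ℝ, 0 ≤ t → φ (-t) x ∈ R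
    · -- backward trajectory stays in R forever
      set g : ℝ → ℝ := fun t => V (φ (-(max t 0)) x) with hgdef
      have hginR : ∀ t, φ (-(max t 0)) x ∈ R := fun t => hall _ (le_max_right _ _)
      have hgm : ∀ s t : ℝ, 0 ≤ s → s < t → g s < g t := by
        intro s t hs hst
        have ht : (0:ℝ) ≤ t := le_of_lt (lt_of_le_of_lt hs hst)
        have hzA : φ (-t) x ∈ A := hRA (hall t ht)
        have hdec := hVdec (φ (-t) x) ⟨hzA, hbackne t ht⟩ 0 (t - s) le_rfl (by linarith)
        rw [hzero, ← hsemi] at hdec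
        have heq : t - s + -t = -s := by ring
        rw [heq] at hdec
        simp only [hgdef, max_eq_left hs, max_eq_left ht]
        linarith
      have hmono : Monotone g := by
        intro s t hst
        rcases lt_or_eq_of_le (max_le_max hst (le_refl (0:ℝ))) with h | h
        · have h1 : g s = g (s ⊔ 0) := by simp only [hgdef, sup_assoc, sup_idem]
          have h2 : g t = g (t ⊔ 0) := by simp only [hgdef, sup_assoc, sup_idem]
          rw [h1, h2]
          exact (hgm _ _ (le_max_right _ _) h).le
        · simp only [hgdef]; rw [h]
      have hbdd : BddAbove (Set.range g) := by
        have hcomp : IsCompact (V '' R) := hR.image_of_continuousOn (hVcont.mono hRA)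
        apply hcomp.bddAbove.mono
        rintro _ ⟨t, rfl⟩
        exact ⟨_, hginR t, rfl⟩
      set c := ⨆ t, g t with hcdef
      have htend : Tendsto g atTop (nhds c) := tendsto_atTop_ciSup hmono hbdd
      have hg0 : g 0 = V x := by simp [hgdef, hzero]
      have hg0c : V x ≤ c := hg0 ▸ le_ciSup hbdd 0
      obtain ⟨y, hyR, σ, hσ, hσtend⟩ :=
        hR.tendsto_subseq (x := fun n : ℕ => φ (-(n : ℝ)) x)
          (fun n => hall _ (Nat.cast_nonneg n))
      have hσat : Tendsto (fun k => ((σ k : ℕ) : ℝ)) atTop atTop :=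
        tendsto_natCast_atTop_atTop.comp hσ.tendsto_atTop
      have hVyc : V y = c := by
        have h1 : Tendsto (fun k => V (φ (-((σ k : ℕ) : ℝ)) x)) atTop (nhds (V y)) :=
          (hVat y (hRA hyR)).tendsto.comp hσtend
        have h2 : Tendsto (fun k => g ((σ k : ℕ) : ℝ)) atTop (nhds c) :=
          htend.comp hσat
        have heq : (fun k => g ((σ k : ℕ) : ℝ)) =
            fun k => V (φ (-((σ k : ℕ) : ℝ)) x) := by
          funext k
          simp only [hgdef,
            max_eq_left (show (0:ℝ) ≤ ((σ k : ℕ) : ℝ) from Nat.cast_nonneg _)]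
        rw [heq] at h2
        exact tendsto_nhds_unique h1 h2
      have hyA : y ∈ A := hRA hyR
      have hyne : y ≠ xstar := by
        intro h
        rw [h, hV0] at hVyc
        have : V x ≤ 0 := hVyc ▸ hg0c
        linarith [hVnn x hxA', hchigh0]
      have hV1c : V (φ 1 y) = c := by
        have h1 : Tendsto (fun k => φ 1 (φ (-((σ k : ℕ) : ℝ)) x)) atTop
            (nhds (φ 1 y)) := ((hφc 1).tendsto y).comp hσtend
        have h1A : φ 1 y ∈ A := hAinv y hyA 1 zero_le_one
        have h2 : Tendsto (fun k => V (φ 1 (φ (-((σ k : ℕ) : ℝ)) x))) atTop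
            (nhds (V (φ 1 y))) := (hVat _ h1A).tendsto.comp h1
        have h3 : Tendsto (fun k => g (((σ k : ℕ) : ℝ) - 1)) atTop (nhds c) :=
          htend.comp (tendsto_atTop_add_const_right _ (-1) hσat)
        have heq : ∀ᶠ k in atTop, g (((σ k : ℕ) : ℝ) - 1) =
            V (φ 1 (φ (-((σ k : ℕ) : ℝ)) x)) := by
          filter_upwards [hσat.eventually_ge_atTop 1] with k hk
          have hmax : max (((σ k : ℕ) : ℝ) - 1) 0 = ((σ k : ℕ) : ℝ) - 1 :=
            max_eq_left (by linarith)
          have harg : φ 1 (φ (-((σ k : ℕ) : ℝ)) x) = φ (1 + -((σ k : ℕ) : ℝ)) x :=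
            (hsemi 1 (-((σ k : ℕ) : ℝ)) x).symm
          have : -(((σ k : ℕ) : ℝ) - 1) = 1 + -((σ k : ℕ) : ℝ) := by ring
          simp only [hgdef, hmax, this, harg]
        have h3' := h3.congr' heq
        exact tendsto_nhds_unique h2 h3'
      have hdec := hVdec y ⟨hyA, hyne⟩ 0 1 le_rfl one_pos
      rw [hzero, hV1c, hVyc] at hdec
      exact lt_irrefl c hdec
    · -- backward trajectory exits R
      push_neg at hall
      set E : Set ℝ := {t | 0 ≤ t ∧ φ (-t) x ∉ R} with hEdef
      have hEne : E.Nonempty := by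
        obtain ⟨t, ht0, htR⟩ := hall
        exact ⟨t, ht0, htR⟩
      have hEbdd : BddBelow E := ⟨0, fun t ht => ht.1⟩
      set T := sInf E with hTdef
      have hT0 : 0 ≤ T := le_csInf hEne (fun t ht => ht.1)
      have hstay : ∀ s, 0 ≤ s → s < T → φ (-s) x ∈ R := by
        intro s hs hsT
        by_contra h
        exact absurd (csInf_le hEbdd ⟨hs, h⟩) (not_le.mpr hsT)
      have hTR : φ (-T) x ∈ R := by
        rcases lt_or_eq_of_le hT0 with h | h
        · have hsub : (fun t => φ (-t) x) '' Set.Ico 0 T ⊆ R := by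
            rintro _ ⟨s, ⟨hs0, hsT⟩, rfl⟩
            exact hstay s hs0 hsT
          have hTcl : T ∈ closure (Set.Ico 0 T) := by
            rw [closure_Ico (ne_of_lt h)]
            exact ⟨hT0, le_rfl⟩
          have hcnt : Continuous fun t : ℝ => φ (-t) x :=
            (hφtraj x).comp continuous_neg
          have := image_closure_subset_closure_image hcnt ⟨T, hTcl, rfl⟩
          exact hR.isClosed.closure_subset (closure_mono hsub this)
        · rw [← h]; simpa [hzero] using hxR
      have hTcomp : φ (-T) x ∈ closure Rᶜ := by
        have hTclE : T ∈ closure E := csInf_mem_closure hEne hEbdd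
        have hcnt : Continuous fun t : ℝ => φ (-t) x :=
          (hφtraj x).comp continuous_neg
        have hsub : (fun t => φ (-t) x) '' E ⊆ Rᶜ := by
          rintro _ ⟨s, ⟨_, hsR⟩, rfl⟩
          exact hsR
        have := image_closure_subset_closure_image hcnt ⟨T, hTclE, rfl⟩
        exact closure_mono hsub this
      have hfr : φ (-T) x ∈ frontier R := by
        rw [frontier_eq_closure_inter_closure]
        exact ⟨subset_closure hTR, hTcomp⟩
      have hVT : V (φ (-T) x) ≤ chigh := hchigh.2 ⟨_, hfr, rfl⟩
      rcases lt_or_eq_of_le hT0 with hTpos | hTzero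
      · have hzA : φ (-T) x ∈ A := hRA hTR
        have hdec := hVdec (φ (-T) x) ⟨hzA, hbackne T hT0⟩ 0 T le_rfl hTpos
        rw [hzero, ← hsemi] at hdec
        simp only [add_neg_cancel, hzero] at hdec
        linarith
      · rw [← hTzero] at hVT
        simp [hzero] at hVT
        linarith
end
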